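/- arXiv:1807.01276 — 6 statements merged into one kernel-verified Lean document; each statement's English description precedes it below -/
import Mathlib

section
/- Let a > 0, τ > 0 with τ ≤ 1/(2a²), and let γ ∈ ℝ with |γ| ≤ τa. Then β = 0 is a global minimizer of the function f_{a,τ}(β) = (1/2)(β−γ)² + τ·a|β|/(a|β|+1) over ℝ; that is, f_{a,τ}(β) ≥ f_{a,τ}(0) for all β ∈ ℝ. -/
/-- If `0 < a`, `0 < τ ≤ 1/(2a²)` and `|γ| ≤ τa`, then `β = 0` is a global
minimizer of `f_{a,τ}(β) = (1/2)(β−γ)² + τ·a|β|/(a|β|+1)` over `ℝ`. -/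
theorem zero_is_global_minimizer_small_tau (a τ γ : ℝ) (ha : 0 < a) (hτ : 0 < τ)
    (hτa : τ ≤ 1 / (2 * a ^ 2)) (hγ : |γ| ≤ τ * a) :
    ∀ β : ℝ,
      (1 / 2) * (β - γ) ^ 2 + τ * (a * |β| / (a * |β| + 1)) ≥
      (1 / 2) * ((0 : ℝ) - γ) ^ 2 + τ * (a * |(0 : ℝ)| / (a * |(0 : ℝ)| + 1)) := by
  intro β
  have ht : (0:ℝ) ≤ |β| := abs_nonneg β
  have hd : (0:ℝ) < a * |β| + 1 := by positivity
  have h1 : β * γ ≤ |β| * (τ * a) := by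
    calc β * γ ≤ |β * γ| := le_abs_self _
    _ = |β| * |γ| := abs_mul β γ
    _ ≤ |β| * (τ * a) := by exact mul_le_mul_of_nonneg_left hγ ht
  have h2 : τ * a ^ 2 ≤ 1 / 2 := by
    rw [le_div_iff₀ (by positivity)] at hτa
    nlinarith
  have key : a * |β| / (a * |β| + 1) * (a * |β| + 1) = a * |β| := by
    field_simp
  simp only [abs_zero, mul_zero, zero_div, sub_zero, zero_sub]
  have hq : 0 ≤ a * |β| / (a * |β| + 1) := by positivity
  have h4 : a * |β| / (a * |β| + 1) ≤ a * |β| := div_le_self (by positivity) (by nlinarith [mul_nonneg ha.le ht])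
  have h3 : a * |β| - a * |β| / (a * |β| + 1) = a * |β| / (a * |β| + 1) * (a * |β|) := by
    field_simp; ring
  have h5 : τ * (a * |β| / (a * |β| + 1)) ≥ τ * a * |β| - (1/2) * |β| ^ 2 := by
    nlinarith [mul_le_mul_of_nonneg_left h4 (mul_nonneg hτ.le (mul_nonneg ha.le ht)),
      mul_le_mul_of_nonneg_right h2 (sq_nonneg |β|)]
  nlinarith [h5, h1, sq_nonneg β, sq_abs β]
end

section
/- Let a > 0, τ > 0 with τ > 1/(2a²), and let γ ∈ ℝ with |γ| ≤ √(2τ) − 1/(2a). Then β = 0 is a global minimizer of the function f_{a,τ}(β) = (1/2)(β−γ)² + τ·a|β|/(a|β|+1) over ℝ; that is, f_{a,τ}(β) ≥ f_{a,τ}(0) for all β ∈ ℝ. -/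
/-- If `0 < a`, `τ > 1/(2a²)` and `|γ| ≤ √(2τ) − 1/(2a)`, then `β = 0` is a
global minimizer of `f_{a,τ}(β) = (1/2)(β−γ)² + τ·a|β|/(a|β|+1)` over `ℝ`. -/
theorem zero_is_global_minimizer_large_tau (a τ γ : ℝ) (ha : 0 < a) (hτ : 0 < τ)
    (hτa : τ > 1 / (2 * a ^ 2)) (hγ : |γ| ≤ Real.sqrt (2 * τ) - 1 / (2 * a)) :
    ∀ β : ℝ,
      (1 / 2) * (β - γ) ^ 2 + τ * (a * |β| / (a * |β| + 1)) ≥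
      (1 / 2) * ((0 : ℝ) - γ) ^ 2 + τ * (a * |(0 : ℝ)| / (a * |(0 : ℝ)| + 1)) := by
  intro β
  set t := |β| with htdef
  have ht : 0 ≤ t := abs_nonneg β
  have hβ2 : β ^ 2 = t ^ 2 := (sq_abs β).symm
  have hd : 0 < a * t + 1 := by positivity
  set q := a * t / (a * t + 1) with hq
  have hq1 : q * (a * t + 1) = a * t := div_mul_cancel₀ _ (ne_of_gt hd)
  set s := Real.sqrt (2 * τ) with hsdef
  have hs2 : s ^ 2 = 2 * τ := Real.sq_sqrt (by linarith)
  have hβγ : β * γ ≤ t * |γ| := by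
    calc β * γ ≤ |β * γ| := le_abs_self _
    _ = t * |γ| := abs_mul β γ
  have hγ' : t * |γ| ≤ t * (s - 1 / (2 * a)) :=
    mul_le_mul_of_nonneg_left hγ ht
  have key : 0 ≤ t * (a * t + 1 - a * s) ^ 2 := mul_nonneg ht (sq_nonneg _)
  -- key algebraic identity after clearing denominators
  have h2 : (a * t + 1) * (a * t ^ 2 - 2 * a * s * t + t + 2 * a * τ * q)
      = t * (a * t + 1 - a * s) ^ 2 := by
    have e1 : (a * t + 1) * (a * t ^ 2 - 2 * a * s * t + t + 2 * a * τ * q)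
        = (a * t + 1) * (a * t ^ 2 - 2 * a * s * t + t) + 2 * a * τ * (q * (a * t + 1)) := by
      ring
    rw [e1, hq1]
    have e2 : 2 * a * τ * (a * t) = a ^ 2 * t * (2 * τ) := by ring
    rw [e2, ← hs2]
    ring
  have hX : 0 ≤ a * t ^ 2 - 2 * a * s * t + t + 2 * a * τ * q := by
    nlinarith [h2, key, hd]
  have h3 : 0 ≤ (1 / 2) * t ^ 2 - t * (s - 1 / (2 * a)) + τ * q := by
    have e3 : (1 / 2) * t ^ 2 - t * (s - 1 / (2 * a)) + τ * q
        = (a * t ^ 2 - 2 * a * s * t + t + 2 * a * τ * q) / (2 * a) := by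
      field_simp
      ring
    rw [e3]
    positivity
  have habs0 : |(0 : ℝ)| = 0 := abs_zero
  simp only [habs0, mul_zero, zero_div, zero_sub]
  nlinarith [h3, hβγ, hγ', hβ2]
end

section
/- Let a > 0, τ > 0, and let γ ∈ ℝ with |γ| > t_{a,τ}, where t_{a,τ} = τa if τ ≤ 1/(2a²) and t_{a,τ} = √(2τ) − 1/(2a) if τ > 1/(2a²). Define φ(γ) = arccos(27τa²/(2(1+a|γ|)³) − 1) and g_{a,τ}(γ) = sign(γ)·( ((1+a|γ|)/3)·(1 + 2cos(φ(γ)/3 − π/3)) − 1 )/a. Then g_{a,τ}(γ) is a global minimizer of f_{a,τ}(β) = (1/2)(β−γ)² + τ·a|β|/(a|β|+1) over ℝ, and g_{a,τ}(γ) ≠ 0. -/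
/-!
For `γ > 0` and `β ≥ 0`, the substitutions `X = aβ + 1`, `c = 1 + aγ` turn stationarity of
`f_{a,τ}` into the cubic `X³ - cX² + τa² = 0`, and `g_{a,τ}(γ) = (x₀ - 1)/a` for Viète's
trigonometric root `x₀`, the largest root. Since `2a²X (f(β) - f(g)) = (X - x₀)² (X - 2(c - x₀))`
and `X ≥ 1`, `g` is a global minimizer once `c - x₀ ≤ 1/2`, i.e. once `x₀² ≥ 2τa²`. The threshold
condition makes the cubic negative at `√(2τa²)`, which gives this, and at `1` (or else
`√(2τa²) > 1`), which gives `x₀ > 1`, i.e. `g > 0`. The case `γ < 0` follows from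
`f_γ(β) = f_{-γ}(-β)`, and `β < 0` is never better than `|β|`.
-/

open Real

noncomputable def threshold (a τ : ℝ) : ℝ :=
  if τ ≤ 1 / (2 * a ^ 2) then τ * a else √(2 * τ) - 1 / (2 * a)

noncomputable def fractionObjective (a τ γ β : ℝ) : ℝ :=
  1 / 2 * (β - γ) ^ 2 + τ * (a * |β| / (a * |β| + 1))

noncomputable def trigRoot (c T : ℝ) : ℝ :=
  c / 3 * (1 + 2 * cos (arccos (27 * T / (2 * c ^ 3) - 1) / 3 - π / 3))

section Cubic

variable {c T x w : ℝ}

lemma cubic_eq_sq_mul_add (c T w : ℝ) :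
    w ^ 3 - c * w ^ 2 + T = (w - 2 * c / 3) ^ 2 * (w + c / 3) + (T - 4 * c ^ 3 / 27) := by
  ring

lemma mul_lt_four_mul_cube_of_cubic_neg (hc : 0 ≤ c) (hw : 0 ≤ w)
    (h : w ^ 3 - c * w ^ 2 + T < 0) : 27 * T < 4 * c ^ 3 := by
  nlinarith [cubic_eq_sq_mul_add c T w, mul_nonneg (sq_nonneg (w - 2 * c / 3))
    (show 0 ≤ w + c / 3 by positivity)]

lemma lt_of_cubic_neg (hc : 0 ≤ c) (hx : x ^ 3 - c * x ^ 2 + T = 0) (hxc : 2 * c / 3 ≤ x)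
    (hw : w ^ 3 - c * w ^ 2 + T < 0) : w < x := by
  by_contra! hxw
  -- the cubic is increasing on `[2c/3, ∞)`
  have hu : 0 ≤ x - 2 * c / 3 := by linarith
  have hv : 0 ≤ w - 2 * c / 3 := by linarith
  have : 0 ≤ (w - x) * (c * (x - 2 * c / 3) + c * (w - 2 * c / 3) + (x - 2 * c / 3) ^ 2
      + (x - 2 * c / 3) * (w - 2 * c / 3) + (w - 2 * c / 3) ^ 2) := by
    apply mul_nonneg (by linarith)
    have := mul_nonneg hu hv
    positivity
  nlinarith

/-- With `cos φ = 27T/(2c³) - 1`, the triple-angle formula at `θ = φ/3 - π/3` makes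
`c/3 (1 + 2 cos θ)` a root; `θ ∈ (-π/3, 0]` gives `cos θ > 1/2`. -/
lemma trigRoot_isRoot (hc : 0 < c) (hT : 0 ≤ T) (h : 27 * T < 4 * c ^ 3) :
    trigRoot c T ^ 3 - c * trigRoot c T ^ 2 + T = 0 ∧ 2 * c / 3 < trigRoot c T := by
  set φ := arccos (27 * T / (2 * c ^ 3) - 1)
  have harg : 27 * T / (2 * c ^ 3) - 1 < 1 := by
    rw [sub_lt_iff_lt_add, div_lt_iff₀ (by positivity)]
    linarith
  have hcosφ : cos φ = 27 * T / (2 * c ^ 3) - 1 :=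
    cos_arccos (by linarith [show 0 ≤ 27 * T / (2 * c ^ 3) by positivity]) harg.le
  have hφ0 : 0 < φ := arccos_pos.2 harg
  have hφπ : φ ≤ π := arccos_le_pi _
  set K := cos (φ / 3 - π / 3)
  have hK : 1 / 2 < K := by
    have := cos_lt_cos_of_nonneg_of_le_pi (x := π / 3 - φ / 3) (y := π / 3) (by linarith)
      (by linarith [pi_pos]) (by linarith)
    rwa [cos_pi_div_three, ← cos_neg, neg_sub] at this
  have hK3 : 4 * K ^ 3 - 3 * K = 1 - 27 * T / (2 * c ^ 3) := by
    rw [← cos_three_mul, show 3 * (φ / 3 - π / 3) = φ - π by ring, cos_sub_pi, hcosφ]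
    ring
  refine ⟨?_, by unfold trigRoot; nlinarith⟩
  unfold trigRoot
  field_simp at hK3
  linear_combination (1 / 27) * hK3

end Cubic

section Objective

variable {a τ γ β x : ℝ}

lemma fractionObjective_abs_le (hγ : 0 ≤ γ) :
    fractionObjective a τ γ |β| ≤ fractionObjective a τ γ β := by
  have : (|β| - γ) ^ 2 ≤ (β - γ) ^ 2 := by
    nlinarith [sq_abs β, mul_nonneg hγ (sub_nonneg.2 (le_abs_self β))]
  simp only [fractionObjective, abs_abs]
  linarith

lemma fractionObjective_abs_sign_mul (hγ : γ ≠ 0) :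
    fractionObjective a τ |γ| (Real.sign γ * β) = fractionObjective a τ γ β := by
  rcases hγ.lt_or_gt with hneg | hpos
  · simp only [fractionObjective, sign_of_neg hneg, abs_of_neg hneg, neg_one_mul, abs_neg]
    ring
  · simp only [fractionObjective, sign_of_pos hpos, abs_of_pos hpos, one_mul]

lemma fractionObjective_le_of_cubic_root (ha : 0 < a) (hx : 1 ≤ x)
    (hroot : x ^ 3 - (1 + a * γ) * x ^ 2 + τ * a ^ 2 = 0) (hgap : 2 * (1 + a * γ - x) ≤ 1)
    (hβ : 0 ≤ β) : fractionObjective a τ γ ((x - 1) / a) ≤ fractionObjective a τ γ β := by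
  have hX : 1 ≤ a * β + 1 := by nlinarith
  have hxg : a * ((x - 1) / a) + 1 = x := by field_simp; ring
  have hτ : τ = x ^ 2 * (1 + a * γ - x) / a ^ 2 := by
    rw [eq_div_iff (by positivity)]
    linear_combination hroot
  have hdiff : fractionObjective a τ γ β - fractionObjective a τ γ ((x - 1) / a) =
      (a * β + 1 - x) ^ 2 * (a * β + 1 - 2 * (1 + a * γ - x)) / (2 * a ^ 2 * (a * β + 1)) := by
    rw [fractionObjective, fractionObjective, abs_of_nonneg hβ,
      abs_of_nonneg (div_nonneg (by linarith) ha.le), hxg, hτ]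
    field_simp
    ring
  have : 0 ≤ (a * β + 1 - x) ^ 2 * (a * β + 1 - 2 * (1 + a * γ - x)) /
      (2 * a ^ 2 * (a * β + 1)) :=
    div_nonneg (mul_nonneg (sq_nonneg _) (by linarith)) (by positivity)
  linarith

end Objective

section Threshold

variable {a τ m : ℝ}

lemma threshold_pos (ha : 0 < a) (hτ : 0 < τ) : 0 < threshold a τ := by
  unfold threshold
  split_ifs with h
  · positivity
  · rw [not_le] at h
    rw [sub_pos, lt_sqrt (by positivity), div_pow, div_lt_iff₀ (by positivity)]
    rw [div_lt_iff₀ (by positivity)] at h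
    linarith

lemma lt_of_threshold_lt (ha : 0 < a) (hτ : 0 < τ) (hm : threshold a τ < m) :
    √(2 * (τ * a ^ 2)) + 1 / 2 < 1 + a * m ∧ (τ * a ^ 2 < a * m ∨ 1 < 2 * (τ * a ^ 2)) := by
  have hS : √(2 * (τ * a ^ 2)) = a * √(2 * τ) := by
    rw [show 2 * (τ * a ^ 2) = 2 * τ * a ^ 2 by ring, sqrt_mul (by positivity), sqrt_sq ha.le,
      mul_comm]
  unfold threshold at hm
  split_ifs at hm with h
  · have hTm : τ * a ^ 2 < a * m := by nlinarith
    have hS2 := sq_sqrt (show 0 ≤ 2 * (τ * a ^ 2) by positivity)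
    exact ⟨by nlinarith [sq_nonneg (√(2 * (τ * a ^ 2)) - 1)], Or.inl hTm⟩
  · rw [not_le, div_lt_iff₀ (by positivity)] at h
    have ham := (mul_lt_mul_iff_right₀ ha).2 hm
    have : a * (1 / (2 * a)) = 1 / 2 := by field_simp
    refine ⟨by rw [hS]; linarith, Or.inr (by linarith)⟩

end Threshold

lemma trigRoot_minimizes_of_threshold_lt {a τ m : ℝ} (ha : 0 < a) (hτ : 0 < τ)
    (hm : threshold a τ < m) :
    0 < (trigRoot (1 + a * m) (τ * a ^ 2) - 1) / a ∧
      ∀ β, fractionObjective a τ m ((trigRoot (1 + a * m) (τ * a ^ 2) - 1) / a) ≤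
        fractionObjective a τ m β := by
  obtain ⟨hsc, hcases⟩ := lt_of_threshold_lt ha hτ hm
  set c := 1 + a * m
  set T := τ * a ^ 2
  set s := √(2 * T)
  set x := trigRoot c T
  have hT : 0 < T := by positivity
  have hs2 : s ^ 2 = 2 * T := sq_sqrt (by positivity)
  have hc : 0 < c := by linarith [sqrt_nonneg (2 * T)]
  -- `s³ - cs² + T = s² (s + 1/2 - c)`
  have hps : s ^ 3 - c * s ^ 2 + T < 0 := by nlinarith
  obtain ⟨hroot, hx⟩ := trigRoot_isRoot hc hT.le
    (mul_lt_four_mul_cube_of_cubic_neg hc.le (sqrt_nonneg _) hps)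
  have hsx : s < x := lt_of_cubic_neg hc.le hroot hx.le hps
  have hx1 : 1 < x := by
    rcases hcases with h | h
    · exact lt_of_cubic_neg hc.le hroot hx.le (by linarith)
    · nlinarith [sqrt_nonneg (2 * T)]
  -- `x² (c - x) = T < x² / 2`
  have hgap : 2 * (c - x) ≤ 1 := by nlinarith [sqrt_nonneg (2 * T)]
  refine ⟨div_pos (by linarith) ha, fun β => ?_⟩
  exact (fractionObjective_le_of_cubic_root ha hx1.le hroot hgap (abs_nonneg β)).trans
    (fractionObjective_abs_le ((threshold_pos ha hτ).trans hm).le)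

/-- If `|γ|` exceeds the threshold `t_{a,τ}`, then
`g_{a,τ}(γ) = sign(γ)·(((1+a|γ|)/3)(1+2cos(φ(γ)/3 − π/3)) − 1)/a`, with
`φ(γ) = arccos(27τa²/(2(1+a|γ|)³) − 1)`, is a nonzero global minimizer of
`f_{a,τ}(β) = (1/2)(β−γ)² + τ·a|β|/(a|β|+1)`. -/
theorem g_is_global_minimizer (a τ γ : ℝ) (ha : 0 < a) (hτ : 0 < τ)
    (t : ℝ)
    (ht : t = if τ ≤ 1 / (2 * a ^ 2) then τ * a else Real.sqrt (2 * τ) - 1 / (2 * a))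
    (hγ : |γ| > t)
    (φ : ℝ) (hφ : φ = Real.arccos (27 * τ * a ^ 2 / (2 * (1 + a * |γ|) ^ 3) - 1))
    (g : ℝ)
    (hg : g = Real.sign γ *
      (((1 + a * |γ|) / 3 * (1 + 2 * Real.cos (φ / 3 - Real.pi / 3)) - 1) / a)) :
    (∀ β : ℝ,
      (1 / 2) * (g - γ) ^ 2 + τ * (a * |g| / (a * |g| + 1)) ≤
      (1 / 2) * (β - γ) ^ 2 + τ * (a * |β| / (a * |β| + 1))) ∧ g ≠ 0 := by
  have hγt : threshold a τ < |γ| := by rwa [ht] at hγ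
  have hγ0 : γ ≠ 0 := by
    rintro rfl
    exact (threshold_pos ha hτ).not_gt (by simpa using hγt)
  have hsign : Real.sign γ ≠ 0 := sign_eq_zero_iff.not.2 hγ0
  have hsign_sq : Real.sign γ * Real.sign γ = 1 := by rw [← mul_inv_cancel₀ hsign, inv_sign]
  obtain ⟨hpos, hmin⟩ := trigRoot_minimizes_of_threshold_lt ha hτ hγt
  have hg' : g = Real.sign γ * ((trigRoot (1 + a * |γ|) (τ * a ^ 2) - 1) / a) := by
    rw [hg, hφ, mul_assoc 27 τ]
    rfl
  refine ⟨fun β => ?_, hg' ▸ mul_ne_zero hsign hpos.ne'⟩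
  change fractionObjective a τ γ g ≤ fractionObjective a τ γ β
  rw [← fractionObjective_abs_sign_mul hγ0, ← fractionObjective_abs_sign_mul hγ0 (β := β),
    hg', ← mul_assoc, hsign_sq, one_mul]
  exact hmin _
end

section
/- Let a > 0, τ > 0, and let γ > t_{a,τ}, where t_{a,τ} = τa if τ ≤ 1/(2a²) and t_{a,τ} = √(2τ) − 1/(2a) if τ > 1/(2a²). Let β* = g_{a,τ}(γ) = ( ((1+aγ)/3)·(1 + 2cos(φ(γ)/3 − π/3)) − 1 )/a with φ(γ) = arccos(27τa²/(2(1+aγ)³) − 1). Then 0 < β* < γ and β* satisfies the stationarity (cubic) equation (β* − γ)(aβ* + 1)² + τa = 0. -/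
set_option maxHeartbeats 1000000


/-- If `γ` exceeds the threshold `t_{a,τ}`, then
`β* = g_{a,τ}(γ) = (((1+aγ)/3)(1+2cos(φ(γ)/3 − π/3)) − 1)/a`, with
`φ(γ) = arccos(27τa²/(2(1+aγ)³) − 1)`, satisfies `0 < β* < γ` and the
stationarity cubic equation `(β* − γ)(aβ* + 1)² + τa = 0`. -/
theorem g_satisfies_cubic (a τ γ : ℝ) (ha : 0 < a) (hτ : 0 < τ)
    (t : ℝ)
    (ht : t = if τ ≤ 1 / (2 * a ^ 2) then τ * a else Real.sqrt (2 * τ) - 1 / (2 * a))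
    (hγ : γ > t)
    (φ : ℝ) (hφ : φ = Real.arccos (27 * τ * a ^ 2 / (2 * (1 + a * γ) ^ 3) - 1))
    (βs : ℝ)
    (hβs : βs = ((1 + a * γ) / 3 * (1 + 2 * Real.cos (φ / 3 - Real.pi / 3)) - 1) / a) :
    0 < βs ∧ βs < γ ∧ (βs - γ) * (a * βs + 1) ^ 2 + τ * a = 0 := by
  have ha' : a ≠ 0 := ne_of_gt ha
  set s := Real.sqrt (2 * τ) with hs
  have hs2 : s ^ 2 = 2 * τ := Real.sq_sqrt (by positivity)
  have hs0 : 0 < s := Real.sqrt_pos.mpr (by positivity)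
  -- γ > 0
  have hγ0 : 0 < γ := by
    rw [ht] at hγ
    split_ifs at hγ with h
    · nlinarith
    · push_neg at h
      rw [div_lt_iff₀ (by positivity)] at h
      have : 1 / a < s := by
        have h1 : (1/a)^2 < s^2 := by rw [hs2]; rw [div_pow]; rw [div_lt_iff₀ (by positivity)]; nlinarith
        nlinarith [sq_nonneg (s - 1/a), div_pos one_pos ha]
      have : 1/(2*a) < s - 1/(2*a) := by
        have : 1/(2*a) = (1/a)/2 := by ring
        nlinarith [div_pos one_pos ha]
      nlinarith [div_pos one_pos (mul_pos two_pos ha)]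
  have hu0 : (0:ℝ) < 1 + a * γ := by nlinarith
  -- key inequality 27 τ a² < 4 (1+aγ)³
  have hbig : 27 * τ * a ^ 2 < 4 * (1 + a * γ) ^ 3 := by
    rw [ht] at hγ
    split_ifs at hγ with h
    · -- τ a² ≤ 1/2, u > 1 + τa²
      have hh : 2 * τ * a ^ 2 ≤ 1 := by
        rw [le_div_iff₀ (by positivity)] at h; nlinarith
      have hu : 1 + τ * a ^ 2 < 1 + a * γ := by nlinarith
      have hcube : (1 + τ * a ^ 2) ^ 3 < (1 + a * γ) ^ 3 :=
        pow_lt_pow_left₀ hu (by positivity) (by norm_num)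
      nlinarith [mul_nonneg (sq_nonneg (2 * τ * a ^ 2 - 1)) (by positivity : (0:ℝ) ≤ τ * a ^ 2 + 4)]
    · push_neg at h
      rw [div_lt_iff₀ (by positivity)] at h
      have hw1 : 1 < a * s := by nlinarith [hs2, mul_pos ha hs0]
      have hu : a * s + 1/2 < 1 + a * γ := by
        have := mul_lt_mul_of_pos_left hγ ha
        have h2 : a * (1/(2*a)) = 1/2 := by field_simp
        nlinarith
      have hcube : (a * s + 1/2) ^ 3 < (1 + a * γ) ^ 3 :=
        pow_lt_pow_left₀ hu (by positivity) (by norm_num)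
      have hτa : 2 * τ * a ^ 2 = (a * s) ^ 2 := by nlinarith
      nlinarith [mul_nonneg (sq_nonneg (a * s - 1)) (by nlinarith : (0:ℝ) ≤ 8 * (a * s) + 1)]
  -- argument of arccos is in (-1, 1)
  have harg1 : 27 * τ * a ^ 2 / (2 * (1 + a * γ) ^ 3) - 1 < 1 := by
    rw [sub_lt_iff_lt_add, div_lt_iff₀ (by positivity)]; nlinarith
  have harg0 : -1 < 27 * τ * a ^ 2 / (2 * (1 + a * γ) ^ 3) - 1 := by
    have : 0 < 27 * τ * a ^ 2 / (2 * (1 + a * γ) ^ 3) := by positivity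
    linarith
  -- φ ∈ (0, π)
  have hφ0 : 0 < φ := hφ ▸ Real.arccos_pos.mpr harg1
  have hφπ : φ < Real.pi := by
    rcases lt_or_eq_of_le (hφ ▸ Real.arccos_le_pi _) with h | h
    · exact h
    · exfalso
      have := Real.cos_arccos (le_of_lt harg0) (le_of_lt harg1)
      rw [← hφ, h, Real.cos_pi] at this
      linarith
  have hπ : 0 < Real.pi := Real.pi_pos
  set c := Real.cos (φ / 3 - Real.pi / 3) with hc
  -- bounds on c
  have hθ1 : -(Real.pi / 3) < φ / 3 - Real.pi / 3 := by linarith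
  have hθ2 : φ / 3 - Real.pi / 3 < 0 := by linarith
  have hceq : c = Real.cos (Real.pi / 3 - φ / 3) := by
    rw [hc, ← Real.cos_neg]; ring_nf
  have hm0 : (0:ℝ) ∈ Set.Icc (0:ℝ) Real.pi := Set.mem_Icc.mpr ⟨le_refl 0, le_of_lt hπ⟩
  have hmθ : Real.pi / 3 - φ / 3 ∈ Set.Icc (0:ℝ) Real.pi := Set.mem_Icc.mpr ⟨by linarith, by linarith⟩
  have hmp3 : Real.pi / 3 ∈ Set.Icc (0:ℝ) Real.pi := Set.mem_Icc.mpr ⟨by linarith, by linarith⟩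
  have hclt : c < 1 := by
    rw [hceq]
    have := Real.strictAntiOn_cos hm0 hmθ (by linarith)
    simpa [Real.cos_zero] using this
  have hcgt : 1/2 < c := by
    rw [hceq]
    have := Real.strictAntiOn_cos hmθ hmp3 (by linarith)
    rw [Real.cos_pi_div_three] at this
    linarith
  -- triple angle identity
  have hkey : 4 * c ^ 3 - 3 * c = 1 - 27 * τ * a ^ 2 / (2 * (1 + a * γ) ^ 3) := by
    have h3 : Real.cos (3 * (φ / 3 - Real.pi / 3)) = 4 * c ^ 3 - 3 * c := by
      rw [Real.cos_three_mul]
    have h4 : (3 : ℝ) * (φ / 3 - Real.pi / 3) = -(Real.pi - φ) := by ring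
    rw [h4, Real.cos_neg, Real.cos_pi_sub, hφ,
      Real.cos_arccos (le_of_lt harg0) (le_of_lt harg1)] at h3
    linarith
  -- x = a βs + 1
  have hx : a * βs + 1 = (1 + a * γ) / 3 * (1 + 2 * c) := by
    rw [hβs]; field_simp; ring
  set x := (1 + a * γ) / 3 * (1 + 2 * c) with hxdef
  have hcube : x ^ 3 - (1 + a * γ) * x ^ 2 + τ * a ^ 2 = 0 := by
    have hne : (1 + a * γ) ≠ 0 := ne_of_gt hu0
    have hkey2 : (4 * c ^ 3 - 3 * c) * (2 * (1 + a * γ) ^ 3)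
        = 2 * (1 + a * γ) ^ 3 - 27 * τ * a ^ 2 := by
      rw [hkey]; field_simp
    rw [hxdef]
    linear_combination (1 / 27) * hkey2
  have hxgt : 2 * (1 + a * γ) / 3 < x := by
    rw [hxdef]
    nlinarith [mul_pos hu0 (by linarith : (0:ℝ) < c - 1/2)]
  have hxu : x < 1 + a * γ := by
    rw [hxdef]
    nlinarith [mul_pos hu0 (by linarith : (0:ℝ) < 1 - c)]
  have hx1 : 1 < x := by
    rw [ht] at hγ
    split_ifs at hγ with h
    · -- case τ ≤ 1/(2a²): use p(1) < 0
      have hp1 : 1 - (1 + a * γ) + τ * a ^ 2 < 0 := by nlinarith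
      by_contra hcon
      push_neg at hcon
      have h1x : 0 ≤ 1 - x := by linarith
      have hx0 : 0 < x := by nlinarith
      have hh1 : 0 ≤ (1 - x) * ((1 - x) * (1 + x / 2)) :=
        mul_nonneg h1x (mul_nonneg h1x (by linarith))
      have hh2 : 0 ≤ (1 - x) * ((3 * x / 2 - (1 + a * γ)) * (1 + x)) :=
        mul_nonneg h1x (mul_nonneg (by linarith) (by linarith))
      nlinarith [hcube, hp1, hh1, hh2]
    · -- case τ > 1/(2a²): u > 3/2
      push_neg at h
      rw [div_lt_iff₀ (by positivity)] at h
      have hw1 : 1 < a * s := by nlinarith [hs2, mul_pos ha hs0]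
      have hu32 : 3 / 2 < 1 + a * γ := by
        have := mul_lt_mul_of_pos_left hγ ha
        have h2 : a * (1 / (2 * a)) = 1 / 2 := by field_simp
        nlinarith
      linarith [hxgt]
  have hc2 : (a * βs + 1) ^ 3 - (1 + a * γ) * (a * βs + 1) ^ 2 + τ * a ^ 2 = 0 := by
    rw [hx]; exact hcube
  refine ⟨?_, ?_, ?_⟩
  · nlinarith [hx, hx1]
  · nlinarith [hx, hxu]
  · have h0 : a * ((βs - γ) * (a * βs + 1) ^ 2 + τ * a) = 0 := by linear_combination hc2
    exact (mul_eq_zero.mp h0).resolve_left ha'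
end

section
/- Let a > 0, τ > 0, and let γ ∈ ℝ with |γ| > t_{a,τ}, where t_{a,τ} = τa if τ ≤ 1/(2a²) and t_{a,τ} = √(2τ) − 1/(2a) if τ > 1/(2a²). Then 27τa² < 4(1+a|γ|)³; consequently the quantity 27τa²/(2(1+a|γ|)³) − 1 lies in the open interval (−1, 1), so that φ(γ) = arccos(27τa²/(2(1+a|γ|)³) − 1) is well defined with φ(γ) ∈ (0, π). -/
/-- If `|γ|` exceeds the threshold `t_{a,τ}`, then `27τa² < 4(1+a|γ|)³`, the
quantity `27τa²/(2(1+a|γ|)³) − 1` lies in `(−1, 1)`, and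
`φ(γ) = arccos(27τa²/(2(1+a|γ|)³) − 1)` lies in `(0, π)`. -/
theorem phi_well_defined (a τ γ : ℝ) (ha : 0 < a) (hτ : 0 < τ)
    (t : ℝ)
    (ht : t = if τ ≤ 1 / (2 * a ^ 2) then τ * a else Real.sqrt (2 * τ) - 1 / (2 * a))
    (hγ : |γ| > t) :
    27 * τ * a ^ 2 < 4 * (1 + a * |γ|) ^ 3 ∧
    (27 * τ * a ^ 2 / (2 * (1 + a * |γ|) ^ 3) - 1) ∈ Set.Ioo (-1 : ℝ) 1 ∧
    Real.arccos (27 * τ * a ^ 2 / (2 * (1 + a * |γ|) ^ 3) - 1) ∈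
      Set.Ioo 0 Real.pi := by
  have hx : (0:ℝ) ≤ |γ| := abs_nonneg γ
  have key : 27 * τ * a ^ 2 < 4 * (1 + a * |γ|) ^ 3 := by
    by_cases h : τ ≤ 1 / (2 * a ^ 2)
    · rw [ht, if_pos h] at hγ
      have hs : τ * a ^ 2 ≤ 1 / 2 := by
        rw [le_div_iff₀ (by positivity)] at h
        nlinarith
      have h2 : τ * a ^ 2 < a * |γ| := by nlinarith
      have hspos : 0 < τ * a ^ 2 := by positivity
      nlinarith [mul_nonneg (sq_nonneg (2 * (τ * a ^ 2) - 1)) (by nlinarith : (0:ℝ) ≤ τ * a ^ 2 + 4),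
        mul_pos (sub_pos.mpr h2)
          (by nlinarith : (0:ℝ) < (1 + a * |γ|) ^ 2 + (1 + a * |γ|) * (1 + τ * a ^ 2) + (1 + τ * a ^ 2) ^ 2)]
    · rw [ht, if_neg h] at hγ
      push_neg at h
      have h2τ : (0:ℝ) ≤ 2 * τ := by positivity
      have hsq : Real.sqrt (2 * τ) ^ 2 = 2 * τ := Real.sq_sqrt h2τ
      set u := a * Real.sqrt (2 * τ) with hu
      have hu2 : u ^ 2 = 2 * τ * a ^ 2 := by
        rw [hu, mul_pow, hsq]; ring
      have hu1 : 1 < u := by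
        have h1 : 1 / a < Real.sqrt (2 * τ) := by
          rw [Real.lt_sqrt (by positivity)]
          rw [div_lt_iff₀ (by positivity)] at h
          rw [div_pow, one_pow, div_lt_iff₀ (by positivity)]
          nlinarith
        calc 1 = a * (1 / a) := by field_simp
        _ < a * Real.sqrt (2 * τ) := by
            exact mul_lt_mul_of_pos_left h1 ha
      have hax : u - 1 / 2 < a * |γ| := by
        have h3 := mul_lt_mul_of_pos_left hγ ha
        have h4 : a * (1 / (2 * a)) = 1 / 2 := by field_simp
        nlinarith
      nlinarith [mul_nonneg (sq_nonneg (u - 1)) (by nlinarith : (0:ℝ) ≤ 8 * u + 1),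
        mul_pos (sub_pos.mpr hax)
          (by nlinarith : (0:ℝ) < (1 + a * |γ|) ^ 2 + (1 + a * |γ|) * (1 / 2 + u) + (1 / 2 + u) ^ 2)]
  have hden : 0 < 2 * (1 + a * |γ|) ^ 3 := by positivity
  have hnum : 0 < 27 * τ * a ^ 2 := by positivity
  have hlt1 : 27 * τ * a ^ 2 / (2 * (1 + a * |γ|) ^ 3) - 1 < 1 := by
    rw [sub_lt_iff_lt_add, div_lt_iff₀ hden]
    nlinarith
  have hgt : (-1 : ℝ) < 27 * τ * a ^ 2 / (2 * (1 + a * |γ|) ^ 3) - 1 := by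
    have : 0 < 27 * τ * a ^ 2 / (2 * (1 + a * |γ|) ^ 3) := div_pos hnum hden
    linarith
  refine ⟨key, ⟨hgt, hlt1⟩, ?_, ?_⟩
  · exact Real.arccos_pos.mpr hlt1
  · have h5 : Real.sin (-(Real.pi / 2)) < 27 * τ * a ^ 2 / (2 * (1 + a * |γ|) ^ 3) - 1 := by
      rw [Real.sin_neg, Real.sin_pi_div_two]; exact hgt
    have h6 := (Real.lt_arcsin_iff_sin_lt'
      ⟨le_rfl, by linarith [Real.pi_pos]⟩).mpr h5
    rw [Real.arccos]
    linarith
end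

section
/- Let a > 0, τ > 0, and let γ ∈ ℝ with |γ| > t_{a,τ}, where t_{a,τ} = τa if τ ≤ 1/(2a²) and t_{a,τ} = √(2τ) − 1/(2a) if τ > 1/(2a²). Then the minimum value of f_{a,τ}(β) = (1/2)(β−γ)² + τ·a|β|/(a|β|+1) is strictly less than f_{a,τ}(0) = γ²/2; in particular, β = 0 is not a global minimizer of f_{a,τ}, so every global minimizer of f_{a,τ} is nonzero. -/
/-! Moving from `0` to `β = ± b` (`b > 0`, sign of `γ`) changes `f_{a,τ}` by
`b · (b/2 + τa/(ab+1) − |γ|)`. The threshold `t_{a,τ}` is the infimum of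
`b/2 + τa/(ab+1)` over `b > 0`: for `τ ≤ 1/(2a²)` this function is increasing and tends to `τa`
as `b → 0`, otherwise it is minimal at `b = √(2τ) − 1/a` with value `√(2τ) − 1/(2a)`.
So `|γ| > t_{a,τ}` yields some `b` with a negative change. -/

open Real

noncomputable def fractionThreshold (a τ : ℝ) : ℝ :=
  if τ ≤ 1 / (2 * a ^ 2) then τ * a else √(2 * τ) - 1 / (2 * a)

section ThresholdWitness

variable {a τ c : ℝ}

lemma exists_pos_half_add_div_lt_of_mul_lt (ha : 0 < a) (hτ : 0 < τ) (hc : τ * a < c) :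
    ∃ b > 0, b / 2 + τ * a / (a * b + 1) < c := by
  refine ⟨c - τ * a, sub_pos.2 hc, ?_⟩
  have hden : 1 < a * (c - τ * a) + 1 := by nlinarith
  have := div_lt_self (by positivity : 0 < τ * a) hden
  linarith

lemma half_add_div_at_critical_point (ha : 0 < a) (hτ : 1 / (2 * a ^ 2) < τ) :
    0 < √(2 * τ) - 1 / a ∧
      (√(2 * τ) - 1 / a) / 2 + τ * a / (a * (√(2 * τ) - 1 / a) + 1) = √(2 * τ) - 1 / (2 * a) := by
  have hinv : 1 / a < √(2 * τ) := by
    rw [← sqrt_sq (by positivity : 0 ≤ 1 / a)]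
    refine sqrt_lt_sqrt (by positivity) ?_
    rw [div_lt_iff₀ (by positivity)] at hτ
    rw [div_pow, one_pow, div_lt_iff₀ (by positivity)]
    linarith
  have hsq : √(2 * τ) ^ 2 = 2 * τ :=
    sq_sqrt (by linarith [hτ, (by positivity : 0 < 1 / (2 * a ^ 2))])
  have hs : 0 < √(2 * τ) := (one_div_pos.2 ha).trans hinv
  refine ⟨sub_pos.2 hinv, ?_⟩
  rw [show a * (√(2 * τ) - 1 / a) + 1 = a * √(2 * τ) by field_simp; ring]
  field_simp
  linear_combination (-a) * hsq

lemma exists_pos_half_add_div_lt (ha : 0 < a) (hτ : 0 < τ) (hc : fractionThreshold a τ < c) :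
    ∃ b > 0, b / 2 + τ * a / (a * b + 1) < c := by
  unfold fractionThreshold at hc
  split_ifs at hc with hsmall
  · exact exists_pos_half_add_div_lt_of_mul_lt ha hτ hc
  · obtain ⟨hb, hval⟩ := half_add_div_at_critical_point ha (not_le.1 hsmall)
    exact ⟨_, hb, hval ▸ hc⟩

end ThresholdWitness

lemma exists_abs_eq_and_mul_eq (γ : ℝ) {b : ℝ} (hb : 0 ≤ b) : ∃ β, |β| = b ∧ β * γ = b * |γ| := by
  rcases le_total 0 γ with hγ | hγ
  · exact ⟨b, abs_of_nonneg hb, by rw [abs_of_nonneg hγ]⟩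
  · exact ⟨-b, by rw [abs_neg, abs_of_nonneg hb], by rw [abs_of_nonpos hγ]; ring⟩

lemma half_sq_sub_add_fraction_sub_half_sq {a τ γ β b : ℝ} (habs : |β| = b)
    (hmul : β * γ = b * |γ|) :
    (1 / 2) * (β - γ) ^ 2 + τ * (a * |β| / (a * |β| + 1)) - γ ^ 2 / 2
      = b * (b / 2 + τ * a / (a * b + 1) - |γ|) := by
  have hsq : β ^ 2 = b ^ 2 := by rw [← sq_abs, habs]
  rw [habs, mul_div_assoc, mul_div_assoc]
  linear_combination (1 / 2) * hsq - hmul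

/-- If `|γ|` exceeds the threshold `t_{a,τ}`, then the infimum of
`f_{a,τ}(β) = (1/2)(β−γ)² + τ·a|β|/(a|β|+1)` is strictly less than
`f_{a,τ}(0) = γ²/2`: some `β` has strictly smaller value, and every global
minimizer of `f_{a,τ}` is nonzero. -/
theorem zero_not_minimizer_above_threshold (a τ γ : ℝ) (ha : 0 < a) (hτ : 0 < τ)
    (t : ℝ)
    (ht : t = if τ ≤ 1 / (2 * a ^ 2) then τ * a else Real.sqrt (2 * τ) - 1 / (2 * a))
    (hγ : |γ| > t)
    (f : ℝ → ℝ)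
    (hf : ∀ β, f β = (1 / 2) * (β - γ) ^ 2 + τ * (a * |β| / (a * |β| + 1))) :
    (∃ β : ℝ, f β < γ ^ 2 / 2) ∧ f 0 = γ ^ 2 / 2 ∧
    ∀ βs : ℝ, (∀ β : ℝ, f βs ≤ f β) → βs ≠ 0 := by
  have hf0 : f 0 = γ ^ 2 / 2 := by rw [hf]; simp only [abs_zero, mul_zero, zero_div]; ring
  obtain ⟨b, hb, hlt⟩ := exists_pos_half_add_div_lt (c := |γ|) ha hτ (by rw [ht] at hγ; exact hγ)
  obtain ⟨β, habs, hmul⟩ := exists_abs_eq_and_mul_eq γ hb.le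
  have hfβ : f β < γ ^ 2 / 2 := by
    have hdiff := half_sq_sub_add_fraction_sub_half_sq (a := a) (τ := τ) habs hmul
    rw [hf]
    nlinarith [mul_neg_of_pos_of_neg hb (sub_neg.2 hlt)]
  refine ⟨⟨β, hfβ⟩, hf0, fun βs hmin hzero => ?_⟩
  have := hmin β
  rw [hzero, hf0] at this
  linarith
end
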